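/- For any complex X in an additive category 𝔞, the inclusion σ_{≥1}(X) ⊕ σ_{≤ −1}(X) → X is a dg-isomorphism in the Vogel dg category 𝒱(𝔞), with inverse given by the corresponding projection. -/

import Mathlib

open CategoryTheory Limits ZeroObject

section Brutal

variable {C : Type*} [Category C] [Preadditive C] [HasZeroObject C]

/-- The brutal truncation `σ_{≥ n} X` of a cochain complex. -/
noncomputable def truncGE (X : CochainComplex C ℤ) (n : ℤ) : CochainComplex C ℤ :=
  CochainComplex.of (fun i => if n ≤ i then X.X i else 0)
    (fun i =>
      if hi : n ≤ i then
        eqToHom (if_pos hi) ≫ X.d i (i + 1) ≫ eqToHom (if_pos (by omega : n ≤ i + 1)).symm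
      else 0)
    (fun i => by
      by_cases hi : n ≤ i
      · rw [dif_pos hi, dif_pos (show n ≤ i + 1 by omega)]; simp
      · rw [dif_neg hi]; simp)

lemma truncGE_X (X : CochainComplex C ℤ) (n i : ℤ) :
    (truncGE X n).X i = if n ≤ i then X.X i else 0 := rfl

lemma truncGE_d (X : CochainComplex C ℤ) (n i : ℤ) :
    (truncGE X n).d i (i + 1) =
      if hi : n ≤ i then
        eqToHom (if_pos hi) ≫ X.d i (i + 1) ≫ eqToHom (if_pos (by omega : n ≤ i + 1)).symm
      else 0 :=
  by simp only [truncGE, CochainComplex.of_d]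

/-- The brutal truncation `σ_{≤ n} X` of a cochain complex. -/
noncomputable def truncLE (X : CochainComplex C ℤ) (n : ℤ) : CochainComplex C ℤ :=
  CochainComplex.of (fun i => if i ≤ n then X.X i else 0)
    (fun i =>
      if hj : i + 1 ≤ n then
        eqToHom (if_pos (by omega : i ≤ n)) ≫ X.d i (i + 1) ≫ eqToHom (if_pos hj).symm
      else 0)
    (fun i => by
      by_cases hj : i + 1 + 1 ≤ n
      · rw [dif_pos (show i + 1 ≤ n by omega), dif_pos hj]; simp
      · rw [dif_neg hj]; simp)

lemma truncLE_X (X : CochainComplex C ℤ) (n i : ℤ) :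
    (truncLE X n).X i = if i ≤ n then X.X i else 0 := rfl

lemma truncLE_d (X : CochainComplex C ℤ) (n i : ℤ) :
    (truncLE X n).d i (i + 1) =
      if hj : i + 1 ≤ n then
        eqToHom (if_pos (by omega : i ≤ n)) ≫ X.d i (i + 1) ≫ eqToHom (if_pos hj).symm
      else 0 :=
  by simp only [truncLE, CochainComplex.of_d]

/-- The canonical inclusion `σ_{≥ n} X ⟶ X`. -/
noncomputable def truncGEι (X : CochainComplex C ℤ) (n : ℤ) : truncGE X n ⟶ X where
  f i := if hi : n ≤ i then eqToHom ((truncGE_X X n i).trans (if_pos hi)) else 0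
  comm' := by
    rintro i j (rfl : i + 1 = j)
    rw [truncGE_d]
    by_cases hi : n ≤ i
    · rw [dif_pos hi, dif_pos hi, dif_pos (show n ≤ i + 1 by omega)]
      erw [Category.assoc, Category.assoc, eqToHom_trans, eqToHom_refl, Category.comp_id]; rfl
    · rw [dif_neg hi, dif_neg hi]; erw [zero_comp, zero_comp]

/-- The canonical projection `X ⟶ σ_{≤ n} X`. -/
noncomputable def truncLEπ (X : CochainComplex C ℤ) (n : ℤ) : X ⟶ truncLE X n where
  f i := if hi : i ≤ n then eqToHom ((if_pos hi).symm.trans (truncLE_X X n i).symm) else 0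
  comm' := by
    rintro i j (rfl : i + 1 = j)
    rw [truncLE_d]
    by_cases hj : i + 1 ≤ n
    · rw [dif_pos hj, dif_pos (show i ≤ n by omega), dif_pos hj]
      erw [eqToHom_trans_assoc, eqToHom_refl, Category.id_comp]; rfl
    · rw [dif_neg hj, dif_neg hj]; erw [comp_zero, comp_zero]

/-- The canonical projection `σ_{≤ a} X ⟶ σ_{≤ b} X` for `b ≤ a`. -/
noncomputable def truncLEmap (X : CochainComplex C ℤ) (a b : ℤ) (hba : b ≤ a) :
    truncLE X a ⟶ truncLE X b where
  f i := if hi : i ≤ b then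
      eqToHom (((truncLE_X X a i).trans (if_pos (hi.trans hba))).trans
        (((truncLE_X X b i).trans (if_pos hi)).symm))
    else 0
  comm' := by
    rintro i j (rfl : i + 1 = j)
    rw [truncLE_d, truncLE_d]
    by_cases hj : i + 1 ≤ b
    · rw [dif_pos hj, dif_pos (show i ≤ b by omega), dif_pos (show i + 1 ≤ a by omega),
        dif_pos hj]
      erw [eqToHom_trans_assoc, Category.assoc, Category.assoc, eqToHom_trans]; rfl
    · rw [dif_neg hj, dif_neg hj]; erw [comp_zero, comp_zero]

/-- A complex is bounded above if its components vanish in all sufficiently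
large degrees. -/
def BoundedAbove (X : CochainComplex C ℤ) : Prop :=
  ∃ b : ℤ, ∀ i : ℤ, b < i → IsZero (X.X i)

/-- A complex is bounded below if its components vanish in all sufficiently
small degrees. -/
def BoundedBelow (X : CochainComplex C ℤ) : Prop :=
  ∃ a : ℤ, ∀ i : ℤ, i < a → IsZero (X.X i)

/-- A complex is bounded if it is bounded above and bounded below. -/
def BoundedComplex (X : CochainComplex C ℤ) : Prop :=
  BoundedAbove X ∧ BoundedBelow X

variable (C) [HasBinaryBiproducts C]

open Pretriangulated in
/-- The class of morphisms in the homotopy category `K(C)` whose cone is isomorphic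
to a bounded complex; the Verdier quotient `K(C)/K^b(C)` is the localization of
`K(C)` at this class. -/
noncomputable def Wb : MorphismProperty (HomotopyCategory C (ComplexShape.up ℤ)) :=
  fun X Y f =>
    ∃ (Z : HomotopyCategory C (ComplexShape.up ℤ)) (g : Y ⟶ Z) (h : Z ⟶ X⟦(1 : ℤ)⟧),
      (Triangle.mk f g h ∈ distTriang (HomotopyCategory C (ComplexShape.up ℤ))) ∧
      ∃ Z₀ : CochainComplex C ℤ, BoundedComplex Z₀ ∧
        Nonempty (Z ≅ (HomotopyCategory.quotient C (ComplexShape.up ℤ)).obj Z₀)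

end Brutal

open CochainComplex.HomComplex

section Vogel

variable {C : Type*} [Category C] [Preadditive C] [HasZeroObject C]

/-- A graded morphism (cochain) is bounded if only finitely many of its components
are nonzero.  The Vogel dg category `𝒱(𝔞)` has morphism complexes
`Hom(X,Y)/\overline{Hom}(X,Y)`, the Hom complexes modulo bounded graded morphisms;
in particular a morphism of `𝒱(𝔞)` is zero iff it admits a bounded representative. -/
def IsBoundedCochain {K L : CochainComplex C ℤ} {n : ℤ} (z : Cochain K L n) : Prop :=
  {p : ℤ | z.v p (p + n) rfl ≠ 0}.Finite

/-- The degreewise (graded, not chain) inclusion `σ_{≤ n} X ⟶ X`. -/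
noncomputable def truncLEIncl (X : CochainComplex C ℤ) (n : ℤ) :
    Cochain (truncLE X n) X 0 :=
  Cochain.mk (fun p q hpq =>
    if hp : p ≤ n then
      eqToHom ((truncLE_X X n p).trans (if_pos hp)) ≫
        eqToHom (congrArg X.X (by omega : p = q))
    else 0)

/-- The degreewise (graded, not chain) projection `X ⟶ σ_{≥ n} X`. -/
noncomputable def truncGEProj (X : CochainComplex C ℤ) (n : ℤ) :
    Cochain X (truncGE X n) 0 :=
  Cochain.mk (fun p q hpq =>
    if hp : n ≤ p then
      eqToHom (congrArg X.X (by omega : p = q)) ≫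
        eqToHom (((truncGE_X X n q).trans (if_pos (by omega))).symm)
    else 0)

variable [HasBinaryBiproducts C]

/-- The canonical graded inclusion `σ_{≥ 1} X ⊕ σ_{≤ -1} X ⟶ X`. -/
noncomputable def vogelIncl (X : CochainComplex C ℤ) :
    Cochain (truncGE X 1 ⊞ truncLE X (-1)) X 0 :=
  Cochain.ofHom (biprod.fst ≫ truncGEι X 1) +
    (Cochain.ofHom (biprod.snd : truncGE X 1 ⊞ truncLE X (-1) ⟶ truncLE X (-1))).comp
      (truncLEIncl X (-1)) (zero_add 0)

/-- The canonical graded projection `X ⟶ σ_{≥ 1} X ⊕ σ_{≤ -1} X`. -/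
noncomputable def vogelProj (X : CochainComplex C ℤ) :
    Cochain X (truncGE X 1 ⊞ truncLE X (-1)) 0 :=
  (truncGEProj X 1).comp
      (Cochain.ofHom (biprod.inl : truncGE X 1 ⟶ truncGE X 1 ⊞ truncLE X (-1))) (add_zero 0) +
    Cochain.ofHom (truncLEπ X (-1) ≫ biprod.inr)

end Vogel


section Helpers

variable {C : Type*} [Category C] [Preadditive C] [HasZeroObject C]

lemma isZero_truncGE_X (X : CochainComplex C ℤ) (n i : ℤ) (h : ¬ n ≤ i) :
    IsZero ((truncGE X n).X i) := by
  rw [truncGE_X, if_neg h]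
  exact isZero_zero C

lemma isZero_truncLE_X (X : CochainComplex C ℤ) (n i : ℤ) (h : ¬ i ≤ n) :
    IsZero ((truncLE X n).X i) := by
  rw [truncLE_X, if_neg h]
  exact isZero_zero C

lemma truncGEι_f (X : CochainComplex C ℤ) (n i : ℤ) :
    (truncGEι X n).f i =
      if hi : n ≤ i then eqToHom ((truncGE_X X n i).trans (if_pos hi)) else 0 := rfl

lemma truncLEπ_f (X : CochainComplex C ℤ) (n i : ℤ) :
    (truncLEπ X n).f i =
      if hi : i ≤ n then eqToHom ((if_pos hi).symm.trans (truncLE_X X n i).symm) else 0 := rfl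

lemma truncLEIncl_v (X : CochainComplex C ℤ) (n p q : ℤ) (hpq : p + 0 = q) :
    (truncLEIncl X n).v p q hpq =
      if hp : p ≤ n then
        eqToHom ((truncLE_X X n p).trans (if_pos hp)) ≫
          eqToHom (congrArg X.X (by omega : p = q))
      else 0 := rfl

lemma truncGEProj_v (X : CochainComplex C ℤ) (n p q : ℤ) (hpq : p + 0 = q) :
    (truncGEProj X n).v p q hpq =
      if hp : n ≤ p then
        eqToHom (congrArg X.X (by omega : p = q)) ≫
          eqToHom (((truncGE_X X n q).trans (if_pos (by omega))).symm)
      else 0 := rfl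

variable [HasBinaryBiproducts C]

lemma biprod_total_f (A B : CochainComplex C ℤ) (i : ℤ) :
    (biprod.fst : A ⊞ B ⟶ A).f i ≫ (biprod.inl : A ⟶ A ⊞ B).f i +
      (biprod.snd : A ⊞ B ⟶ B).f i ≫ (biprod.inr : B ⟶ A ⊞ B).f i = 𝟙 _ := by
  rw [← HomologicalComplex.comp_f, ← HomologicalComplex.comp_f,
    ← HomologicalComplex.add_f_apply, biprod.total, HomologicalComplex.id_f]

lemma biprod_inl_fst_f (A B : CochainComplex C ℤ) (i : ℤ) :
    (biprod.inl : A ⟶ A ⊞ B).f i ≫ (biprod.fst : A ⊞ B ⟶ A).f i = 𝟙 _ := by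
  rw [← HomologicalComplex.comp_f, biprod.inl_fst, HomologicalComplex.id_f]

lemma biprod_inl_snd_f (A B : CochainComplex C ℤ) (i : ℤ) :
    (biprod.inl : A ⟶ A ⊞ B).f i ≫ (biprod.snd : A ⊞ B ⟶ B).f i = 0 := by
  rw [← HomologicalComplex.comp_f, biprod.inl_snd]; rfl

lemma biprod_inr_fst_f (A B : CochainComplex C ℤ) (i : ℤ) :
    (biprod.inr : B ⟶ A ⊞ B).f i ≫ (biprod.fst : A ⊞ B ⟶ A).f i = 0 := by
  rw [← HomologicalComplex.comp_f, biprod.inr_fst]; rfl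

lemma biprod_inr_snd_f (A B : CochainComplex C ℤ) (i : ℤ) :
    (biprod.inr : B ⟶ A ⊞ B).f i ≫ (biprod.snd : A ⊞ B ⟶ B).f i = 𝟙 _ := by
  rw [← HomologicalComplex.comp_f, biprod.inr_snd, HomologicalComplex.id_f]


lemma biprod_inl_fst_f_assoc (A B : CochainComplex C ℤ) (i : ℤ) {T : C}
    (h : A.X i ⟶ T) :
    (biprod.inl : A ⟶ A ⊞ B).f i ≫ (biprod.fst : A ⊞ B ⟶ A).f i ≫ h = h := by
  rw [← Category.assoc, biprod_inl_fst_f, Category.id_comp]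

lemma biprod_inl_snd_f_assoc (A B : CochainComplex C ℤ) (i : ℤ) {T : C}
    (h : B.X i ⟶ T) :
    (biprod.inl : A ⟶ A ⊞ B).f i ≫ (biprod.snd : A ⊞ B ⟶ B).f i ≫ h = 0 := by
  rw [← Category.assoc, biprod_inl_snd_f, zero_comp]

lemma biprod_inr_fst_f_assoc (A B : CochainComplex C ℤ) (i : ℤ) {T : C}
    (h : A.X i ⟶ T) :
    (biprod.inr : B ⟶ A ⊞ B).f i ≫ (biprod.fst : A ⊞ B ⟶ A).f i ≫ h = 0 := by
  rw [← Category.assoc, biprod_inr_fst_f, zero_comp]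

lemma biprod_inr_snd_f_assoc (A B : CochainComplex C ℤ) (i : ℤ) {T : C}
    (h : B.X i ⟶ T) :
    (biprod.inr : B ⟶ A ⊞ B).f i ≫ (biprod.snd : A ⊞ B ⟶ B).f i ≫ h = h := by
  rw [← Category.assoc, biprod_inr_snd_f, Category.id_comp]

end Helpers


section Delta
set_option linter.unusedSectionVars false
variable {C : Type*} [Category C] [Preadditive C] [HasZeroObject C]

lemma delta_truncLEIncl_v_eq_zero (X : CochainComplex C ℤ) (p : ℤ) (hp : p ≠ -1) :
    (δ 0 1 (truncLEIncl X (-1))).v p (p + 1) rfl = 0 := by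
  rw [δ_zero_cochain_v, truncLEIncl_v, truncLEIncl_v]
  by_cases h : p ≤ -1
  · have h' : p + 1 ≤ -1 := by omega
    rw [dif_pos h, dif_pos h', truncLE_d, dif_pos h']
    simp
    rw [sub_eq_zero]
    erw [Category.assoc, Category.assoc, eqToHom_trans, eqToHom_refl, Category.comp_id]; rfl
  · have h' : ¬ p + 1 ≤ -1 := by omega
    rw [dif_neg h, truncLE_d, dif_neg h']
    simp
    exact zero_comp

lemma delta_truncGEProj_v_eq_zero (X : CochainComplex C ℤ) (p : ℤ) (hp : p ≠ 0) :
    (δ 0 1 (truncGEProj X 1)).v p (p + 1) rfl = 0 := by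
  rw [δ_zero_cochain_v, truncGEProj_v, truncGEProj_v]
  by_cases h : (1 : ℤ) ≤ p
  · have h' : (1 : ℤ) ≤ p + 1 := by omega
    rw [dif_pos h, dif_pos h', truncGE_d, dif_pos h]
    simp
    rw [sub_eq_zero]
    erw [eqToHom_trans_assoc, eqToHom_refl, Category.id_comp]; rfl
  · have h' : ¬ (1 : ℤ) ≤ p + 1 := by omega
    rw [dif_neg h, dif_neg h', truncGE_d, dif_neg h]
    simp
    exact zero_comp

end Delta


lemma ofHom_v' {C : Type*} [Category C] [Preadditive C] {F G : CochainComplex C ℤ}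
    (φ : F ⟶ G) (p q : ℤ) (hpq : p + 0 = q) :
    (Cochain.ofHom φ).v p q hpq = φ.f p ≫ eqToHom (congrArg G.X (by omega : p = q)) := rfl

/-- **The inclusion `σ_{≥1} X ⊕ σ_{≤-1} X ⟶ X` is a dg-isomorphism in the Vogel
dg category `𝒱(𝔞)`.** Concretely: the canonical graded inclusion `ι` and graded
projection `π` are closed morphisms of degree `0` modulo bounded morphisms
(their differentials are bounded), `ι ∘ π` equals the identity, and `π ∘ ι`
differs from the identity by a bounded graded morphism; hence `ι` represents a
closed degree-`0` isomorphism in `𝒱(𝔞)` with inverse represented by `π`. -/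
theorem vogelIncl_is_dg_isomorphism
    {C : Type*} [Category C] [Preadditive C] [HasZeroObject C] [HasBinaryBiproducts C]
    (X : CochainComplex C ℤ) :
    IsBoundedCochain (δ 0 1 (vogelIncl X)) ∧
    IsBoundedCochain (δ 0 1 (vogelProj X)) ∧
    (vogelIncl X).comp (vogelProj X) (zero_add 0) =
      Cochain.ofHom (𝟙 (truncGE X 1 ⊞ truncLE X (-1))) ∧
    IsBoundedCochain ((vogelProj X).comp (vogelIncl X) (zero_add 0) -
      Cochain.ofHom (𝟙 X)) := by
  refine ⟨?_, ?_, ?_, ?_⟩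
  · -- δ (vogelIncl X) is bounded
    have h1 : δ 0 1 (vogelIncl X) =
        (Cochain.ofHom (biprod.snd : truncGE X 1 ⊞ truncLE X (-1) ⟶ truncLE X (-1))).comp
          (δ 0 1 (truncLEIncl X (-1))) (zero_add 1) := by
      rw [vogelIncl, δ_add, δ_ofHom, zero_add, δ_ofHom_comp]
    apply Set.Finite.subset (Set.finite_singleton (-1 : ℤ))
    intro p hp
    simp only [Set.mem_setOf_eq] at hp
    simp only [Set.mem_singleton_iff]
    by_contra hne
    exact hp (by rw [h1, Cochain.zero_cochain_comp_v,
      delta_truncLEIncl_v_eq_zero X p hne, comp_zero])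
  · -- δ (vogelProj X) is bounded
    have h2 : δ 0 1 (vogelProj X) =
        (δ 0 1 (truncGEProj X 1)).comp
          (Cochain.ofHom (biprod.inl : truncGE X 1 ⟶ truncGE X 1 ⊞ truncLE X (-1)))
          (add_zero 1) := by
      rw [vogelProj, δ_add, δ_comp_ofHom, δ_ofHom, add_zero]
    apply Set.Finite.subset (Set.finite_singleton (0 : ℤ))
    intro p hp
    simp only [Set.mem_setOf_eq] at hp
    simp only [Set.mem_singleton_iff]
    by_contra hne
    exact hp (by rw [h2, Cochain.comp_zero_cochain_v,
      delta_truncGEProj_v_eq_zero X p hne, zero_comp])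
  · -- ι ∘ π = id
    ext p : 1
    rw [Cochain.comp_zero_cochain_v]
    simp only [vogelIncl, vogelProj, Cochain.add_v, Cochain.ofHom_v,
      Cochain.zero_cochain_comp_v, Cochain.comp_zero_cochain_v,
      HomologicalComplex.comp_f, truncGEι_f, truncLEπ_f, truncLEIncl_v, truncGEProj_v,
      HomologicalComplex.id_f]
    by_cases h1 : (1 : ℤ) ≤ p
    · have h2 : ¬ p ≤ (-1 : ℤ) := by omega
      rw [dif_pos h1, dif_pos h1, dif_neg h2, dif_neg h2]
      have hz : (biprod.snd : truncGE X 1 ⊞ truncLE X (-1) ⟶ truncLE X (-1)).f p = 0 :=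
        (isZero_truncLE_X X (-1) p h2).eq_of_tgt _ _
      rw [← biprod_total_f (truncGE X 1) (truncLE X (-1)) p, hz]
      simp
    · by_cases h2 : p ≤ (-1 : ℤ)
      · rw [dif_neg h1, dif_neg h1, dif_pos h2, dif_pos h2]
        have hz : (biprod.fst : truncGE X 1 ⊞ truncLE X (-1) ⟶ truncGE X 1).f p = 0 :=
          (isZero_truncGE_X X 1 p h1).eq_of_tgt _ _
        rw [← biprod_total_f (truncGE X 1) (truncLE X (-1)) p, hz]
        simp
      · rw [dif_neg h1, dif_neg h1, dif_neg h2, dif_neg h2]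
        have hzf : (biprod.fst : truncGE X 1 ⊞ truncLE X (-1) ⟶ truncGE X 1).f p = 0 :=
          (isZero_truncGE_X X 1 p h1).eq_of_tgt _ _
        have hzs : (biprod.snd : truncGE X 1 ⊞ truncLE X (-1) ⟶ truncLE X (-1)).f p = 0 :=
          (isZero_truncLE_X X (-1) p h2).eq_of_tgt _ _
        rw [← biprod_total_f (truncGE X 1) (truncLE X (-1)) p, hzf, hzs]
        simp
  · -- π ∘ ι - id is bounded
    apply Set.Finite.subset (Set.finite_singleton (0 : ℤ))
    intro p hp
    simp only [Set.mem_setOf_eq] at hp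
    simp only [Set.mem_singleton_iff]
    by_contra hne
    apply hp
    rw [Cochain.sub_v, Cochain.comp_zero_cochain_v]
    simp only [vogelIncl, vogelProj, Cochain.add_v, ofHom_v',
      Cochain.zero_cochain_comp_v, Cochain.comp_zero_cochain_v,
      HomologicalComplex.comp_f, truncGEι_f, truncLEπ_f, truncLEIncl_v, truncGEProj_v,
      HomologicalComplex.id_f]
    by_cases h1 : (1 : ℤ) ≤ p
    · rw [dif_pos h1, dif_pos (show (1 : ℤ) ≤ p + 0 by omega),
        dif_neg (show ¬ p ≤ (-1 : ℤ) by omega),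
        dif_neg (show ¬ p + 0 ≤ (-1 : ℤ) by omega)]
      simp [biprod_inl_fst_f_assoc, biprod_inl_snd_f_assoc, biprod_inl_fst_f,
        biprod_inl_snd_f]
    · have h2 : p ≤ (-1 : ℤ) := by omega
      rw [dif_neg h1, dif_neg (show ¬ (1 : ℤ) ≤ p + 0 by omega), dif_pos h2,
        dif_pos (show p + 0 ≤ (-1 : ℤ) by omega)]
      simp [biprod_inr_fst_f_assoc, biprod_inr_snd_f_assoc, biprod_inr_fst_f,
        biprod_inr_snd_f]
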